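/- Let p ≥ 1 be an integer, 0 ≤ m ≤ p − 1, and u > arccosh(3/2). Then 4p²π² − (4m+3)u² + 4pu·φ(u) > 0, where φ(u) = arccosh(cosh u − 1/2). -/

import Mathlib

noncomputable def arcosh (x : ℝ) : ℝ := Real.log (x + Real.sqrt (x ^ 2 - 1))

noncomputable def kappa : ℝ := arcosh (3 / 2)

noncomputable def phi (u : ℝ) : ℝ := arcosh (Real.cosh u - 1 / 2)

/-! Since `m ≤ p - 1`, the quantity is at least `4p²π² + u² - 4pu (u - φ u)`. The key estimate
is `u - φ u ≤ κ`, which follows from `cosh a + cosh b - 1 ≤ cosh (a + b)` for `a, b ≥ 0`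
applied with `a = κ`, `b = u - κ`. It leaves `(2pπ - u)² + 4pu (π - κ)`, positive as `κ < π`. -/

open Real

theorem Real.cosh_add_cosh_sub_one_le_cosh_add {a b : ℝ} (ha : 0 ≤ a) (hb : 0 ≤ b) :
    cosh a + cosh b - 1 ≤ cosh (a + b) := by
  have hsinh : 0 ≤ sinh a * sinh b :=
    mul_nonneg (sinh_nonneg_iff.mpr ha) (sinh_nonneg_iff.mpr hb)
  have hcosh : 0 ≤ (cosh a - 1) * (cosh b - 1) :=
    mul_nonneg (sub_nonneg.mpr (one_le_cosh a)) (sub_nonneg.mpr (one_le_cosh b))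
  rw [cosh_add]
  linarith

-- `arcosh` is `Real.arcosh` by definition, so the library's API applies to it directly.
theorem cosh_kappa : cosh kappa = 3 / 2 :=
  cosh_arcosh (by norm_num)

theorem kappa_pos : 0 < kappa :=
  arcosh_pos (by norm_num)

theorem kappa_lt_pi : kappa < π := by
  have hcosh : 3 / 2 < cosh π := by
    rw [cosh_eq]
    linarith [add_one_le_exp π, exp_pos (-π), pi_gt_three]
  calc kappa < Real.arcosh (cosh π) := (arcosh_lt_arcosh (by norm_num) (cosh_pos π)).mpr hcosh
    _ = π := arcosh_cosh pi_pos.le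

theorem sub_kappa_le_phi {u : ℝ} (hu : kappa ≤ u) : u - kappa ≤ phi u := by
  have hcosh : cosh (u - kappa) ≤ cosh u - 1 / 2 := by
    have := cosh_add_cosh_sub_one_le_cosh_add kappa_pos.le (sub_nonneg.mpr hu)
    rw [cosh_kappa, add_sub_cancel] at this
    linarith
  calc u - kappa = Real.arcosh (cosh (u - kappa)) := (arcosh_cosh (sub_nonneg.mpr hu)).symm
    _ ≤ phi u := (arcosh_le_arcosh (cosh_pos _) (by linarith [one_le_cosh u])).mpr hcosh

theorem quad_pos' (p m : ℕ) (hp : 1 ≤ p) (hm : m ≤ p - 1) (u : ℝ) (hu : kappa < u) :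
    0 < 4 * p ^ 2 * Real.pi ^ 2 - (4 * m + 3) * u ^ 2 + 4 * p * u * phi u := by
  have hu₀ : 0 < u := kappa_pos.trans hu
  have hp₀ : (0 : ℝ) < p := by exact_mod_cast hp
  have hmp : (m : ℝ) + 1 ≤ p := by exact_mod_cast (by omega : m + 1 ≤ p)
  have hcoeff : (4 * m + 3) * u ^ 2 ≤ (4 * p - 1) * u ^ 2 := by gcongr; linarith
  have hphi : 4 * p * u * (u - kappa) ≤ 4 * p * u * phi u := by
    gcongr; exact sub_kappa_le_phi hu.le
  have hgap : 0 < π - kappa := sub_pos.mpr kappa_lt_pi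
  calc (0 : ℝ) < (2 * p * π - u) ^ 2 + 4 * p * u * (π - kappa) := by positivity
    _ = 4 * p ^ 2 * π ^ 2 - (4 * p - 1) * u ^ 2 + 4 * p * u * (u - kappa) := by ring
    _ ≤ _ := by linarith
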